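/- For an almost paracontact metric manifold M the following statements are equivalent: (1) M is τ-normal; (2) M is a para-CR manifold; (3) setting u(Y,X) = dτ(ψY, X) + g(hY, X), the Levi-Civita covariant derivative of ψ satisfies g((∇_X ψ)Y, Z) = −(3/2)·dΨ(X, ψY, ψZ) − (3/2)·dΨ(X, Y, Z) + u(Y,X)·τ(Z) − u(Z,X)·τ(Y) for all vector fields X, Y, Z. -/

import Mathlib

noncomputable section

/-!
An abstract model of smooth geometry: `F` plays the role of the algebra of
smooth real-valued functions on a manifold `M`, `V` plays the role of the
`C^∞(M)`-module of smooth vector fields on `M` (with its Lie bracket), and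
`D X f` represents the directional derivative of the function `f` along the
vector field `X`.
-/
structure SmoothSetting (F V : Type*) [CommRing F] [Algebra ℝ F]
    [LieRing V] [Module F V] [Module ℝ V] [IsScalarTower ℝ F V] where
  D : V → F → F
  D_add : ∀ (X : V) (f g : F), D X (f + g) = D X f + D X g
  D_mul : ∀ (X : V) (f g : F), D X (f * g) = f * D X g + g * D X f
  D_addX : ∀ (X Y : V) (f : F), D (X + Y) f = D X f + D Y f
  D_smulX : ∀ (f : F) (X : V) (k : F), D (f • X) k = f * D X k
  D_bracket : ∀ (X Y : V) (f : F), D ⁅X, Y⁆ f = D X (D Y f) - D Y (D X f)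
  bracket_smul : ∀ (f : F) (X Y : V), ⁅X, f • Y⁆ = f • ⁅X, Y⁆ + D X f • Y

/-- An almost paracontact metric manifold, modelled abstractly: a quadruple
`(ψ, ζ, τ, g)` where `ψ` is a `(1,1)`-tensor field, `ζ` a vector field, `τ` a
one-form and `g` a pseudo-Riemannian metric, satisfying `ψ² = Id - τ ⊗ ζ`,
`τ(ζ) = 1` and `g(ψX, ψY) = -g(X,Y) + τ(X)τ(Y)` (together with the standard
consequent identities `ψζ = 0`, `τ ∘ ψ = 0`), and the Levi-Civita connection
`nabla` of `g` (characterised by metricity and torsion-freeness). -/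
structure APCMS (F V : Type*) [CommRing F] [Algebra ℝ F]
    [LieRing V] [Module F V] [Module ℝ V] [IsScalarTower ℝ F V]
    extends SmoothSetting F V where
  psi : V → V
  zeta : V
  tau : V → F
  g : V → V → F
  psi_add : ∀ X Y : V, psi (X + Y) = psi X + psi Y
  psi_smul : ∀ (f : F) (X : V), psi (f • X) = f • psi X
  tau_add : ∀ X Y : V, tau (X + Y) = tau X + tau Y
  tau_smul : ∀ (f : F) (X : V), tau (f • X) = f * tau X
  g_addX : ∀ X Y Z : V, g (X + Y) Z = g X Z + g Y Z
  g_smulX : ∀ (f : F) (X Y : V), g (f • X) Y = f * g X Y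
  g_symm : ∀ X Y : V, g X Y = g Y X
  g_nondeg : ∀ X : V, (∀ Y : V, g X Y = 0) → X = 0
  psi_psi : ∀ X : V, psi (psi X) = X - tau X • zeta
  tau_zeta : tau zeta = 1
  psi_zeta : psi zeta = 0
  tau_psi : ∀ X : V, tau (psi X) = 0
  g_psi_psi : ∀ X Y : V, g (psi X) (psi Y) = - g X Y + tau X * tau Y
  nabla : V → V → V
  nabla_addX : ∀ X Y Z : V, nabla (X + Y) Z = nabla X Z + nabla Y Z
  nabla_smulX : ∀ (f : F) (X Y : V), nabla (f • X) Y = f • nabla X Y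
  nabla_addY : ∀ X Y Z : V, nabla X (Y + Z) = nabla X Y + nabla X Z
  nabla_leibniz : ∀ (X : V) (f : F) (Y : V),
    nabla X (f • Y) = D X f • Y + f • nabla X Y
  nabla_torsion_free : ∀ X Y : V, nabla X Y - nabla Y X = ⁅X, Y⁆
  nabla_metric : ∀ X Y Z : V,
    D X (g Y Z) = g (nabla X Y) Z + g Y (nabla X Z)

namespace APCMS

variable {F V : Type*} [CommRing F] [Algebra ℝ F]
  [LieRing V] [Module F V] [Module ℝ V] [IsScalarTower ℝ F V]
variable (A : APCMS F V)

/-- The fundamental form `Ψ(X,Y) = g(X, ψY)`. -/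
def Psi2 (X Y : V) : F := A.g X (A.psi Y)

/-- The exterior derivative `dτ`, via the coboundary formula
`2 dτ(X,Y) = X τ(Y) - Y τ(X) - τ([X,Y])`. -/
def dTau (X Y : V) : F :=
  ((1:ℝ)/2) • (A.D X (A.tau Y) - A.D Y (A.tau X) - A.tau ⁅X, Y⁆)

/-- The exterior derivative `dΨ`, via the coboundary formula. -/
def dPsi (X Y Z : V) : F :=
  ((1:ℝ)/3) • (A.D X (A.Psi2 Y Z) + A.D Y (A.Psi2 Z X) + A.D Z (A.Psi2 X Y)
    - A.Psi2 ⁅X, Y⁆ Z - A.Psi2 ⁅Y, Z⁆ X - A.Psi2 ⁅Z, X⁆ Y)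

/-- The Lie derivative `(L_ζ τ)(X)`. -/
def lieTau (X : V) : F := A.D A.zeta (A.tau X) - A.tau ⁅A.zeta, X⁆

/-- The Lie derivative `(L_ζ ψ)(X)`. -/
def liePsi (X : V) : V := ⁅A.zeta, A.psi X⁆ - A.psi ⁅A.zeta, X⁆

/-- The tensor field `h = (1/2) L_ζ ψ`. -/
def h (X : V) : V := ((1:ℝ)/2) • A.liePsi X

/-- The Nijenhuis torsion `[ψ,ψ](X,Y)`. -/
def nijPsi (X Y : V) : V :=
  A.psi (A.psi ⁅X, Y⁆) + ⁅A.psi X, A.psi Y⁆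
    - A.psi ⁅A.psi X, Y⁆ - A.psi ⁅X, A.psi Y⁆

/-- The tensor `K⁽¹⁾(X,Y) = [ψ,ψ](X,Y) - 2 dτ(X,Y) ζ`. -/
def K1 (X Y : V) : V := A.nijPsi X Y - (2 * A.dTau X Y) • A.zeta

/-- The tensor `K⁽²⁾(X,Y) = (L_{ψX} τ)(Y) - (L_{ψY} τ)(X)`. -/
def K2 (X Y : V) : F :=
  (A.D (A.psi X) (A.tau Y) - A.tau ⁅A.psi X, Y⁆)
    - (A.D (A.psi Y) (A.tau X) - A.tau ⁅A.psi Y, X⁆)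

/-- The covariant derivative `(∇_X ψ)(Y)`. -/
def covPsi (X Y : V) : V := A.nabla X (A.psi Y) - A.psi (A.nabla X Y)

/-- `M` is `τ`-normal: `K⁽¹⁾(X,Y) = 0` whenever `τ(X) = τ(Y) = 0`. -/
def TauNormal : Prop := ∀ X Y : V, A.tau X = 0 → A.tau Y = 0 → A.K1 X Y = 0

/-- `M` is normal: `K⁽¹⁾ = 0` identically. -/
def Normal : Prop := ∀ X Y : V, A.K1 X Y = 0

/-- `X` is a section of the `+1`-eigendistribution `V⁺` of `ψ`. -/
def Vp (X : V) : Prop := A.psi X = X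

/-- `X` is a section of the `-1`-eigendistribution `V⁻` of `ψ`. -/
def Vm (X : V) : Prop := A.psi X = -X

/-- `M` is a para-CR manifold: both eigendistributions `V⁺`, `V⁻` of `ψ` are
involutive. -/
def ParaCR : Prop :=
  (∀ X Y : V, A.Vp X → A.Vp Y → A.Vp ⁅X, Y⁆) ∧
  (∀ X Y : V, A.Vm X → A.Vm Y → A.Vm ⁅X, Y⁆)

/-- The characteristic form `τ` is a contact form: `dτ` is nondegenerate on
the kernel distribution of `τ`. -/
def IsContact : Prop :=
  ∀ X : V, A.tau X = 0 → (∀ Y : V, A.dTau X Y = 0) → X = 0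

/-- The Reeb vector field of the contact form `τ` equals the characteristic
vector field `ζ` (i.e. `τ(ζ) = 1`, which holds by definition, and
`ι_ζ dτ = 0`). -/
def ReebEqZeta : Prop := ∀ X : V, A.dTau A.zeta X = 0

/-- The Pang invariant `Π(X,Y) = (L_X L_Y τ)(ζ) = -τ([[ζ,X],Y])`; restricted
to sections of `V⁺` (resp. `V⁻`) it is the Pang invariant `Π₊` (resp. `Π₋`)
of the Legendrian foliation determined by `V⁺` (resp. `V⁻`). -/
def Pang (X Y : V) : F := - A.tau ⁅⁅A.zeta, X⁆, Y⁆

/-- The tensor field `χ(X,Y) = dτ(hX, ψY)`. -/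
def chi (X Y : V) : F := A.dTau (A.h X) (A.psi Y)

/-- `Dc` is a linear connection on `M`. -/
def IsConnection (Dc : V → V → V) : Prop :=
  (∀ X Y Z : V, Dc (X + Y) Z = Dc X Z + Dc Y Z) ∧
  (∀ (f : F) (X Y : V), Dc (f • X) Y = f • Dc X Y) ∧
  (∀ X Y Z : V, Dc X (Y + Z) = Dc X Y + Dc X Z) ∧
  (∀ (X : V) (f : F) (Y : V), Dc X (f • Y) = A.D X f • Y + f • Dc X Y)

/-- `Dc` is a parallelization: a linear connection making the whole almost
paracontact metric structure parallel: `∇̃ψ = 0`, `∇̃ζ = 0`, `∇̃τ = 0`,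
`∇̃g = 0`. -/
def IsParallelization (Dc : V → V → V) : Prop :=
  A.IsConnection Dc ∧
  (∀ X Y : V, Dc X (A.psi Y) = A.psi (Dc X Y)) ∧
  (∀ X : V, Dc X A.zeta = 0) ∧
  (∀ X Y : V, A.D X (A.tau Y) = A.tau (Dc X Y)) ∧
  (∀ X Y Z : V, A.D X (A.g Y Z) = A.g (Dc X Y) Z + A.g Y (Dc X Z))

end APCMS

/-!
Applying the Koszul formula to `g(∇_X ψY, Z)` and `g(∇_X Y, ψZ)` gives
`g((∇_X ψ)Y, Z) = (right-hand side of (3)) + g(X, N(Y,Z))` with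
`N(Y,Z) = ½ψK⁽¹⁾(Y,Z) + ½K⁽²⁾(Y,Z)ζ - τ(Z)hY + τ(Y)hZ`, so by nondegeneracy of `g`,
(3) holds iff `N = 0`. `N` is a skew tensor with `N(ζ, ·) = 0`, hence it vanishes iff it
vanishes on `ker τ = V⁺ ⊕ V⁻`. For `a, b` both in `V⁺` (resp. `V⁻`), `K⁽¹⁾(a,b)` and
`N(a,b)` are nonzero multiples of `ψ[a,b] - [a,b]` (resp. `ψ[a,b] + [a,b]`), while
`K⁽¹⁾(V⁺, V⁻) = 0`; so `τ`-normality, involutivity of `V^±` and `N = 0` are the same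
condition.
-/

section RealAlgebra

variable {F : Type*} [CommRing F] [Algebra ℝ F]

lemma two_mul_real_smul (r : ℝ) (x : F) : 2 * (r • x) = (2 * r) • x := by
  rw [two_mul, two_mul, add_smul]

lemma eq_of_two_mul_eq {x y : F} (h : 2 * x = 2 * y) : x = y := by
  have half_two_mul : ∀ z : F, ((1:ℝ)/2) • (2 * z) = z := fun z => by
    rw [← mul_smul_comm, two_mul_real_smul]; norm_num
  rw [← half_two_mul x, h, half_two_mul]

end RealAlgebra

namespace APCMS

variable {F V : Type*} [CommRing F] [Algebra ℝ F]
  [LieRing V] [Module F V] [Module ℝ V] [IsScalarTower ℝ F V]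
variable (A : APCMS F V)

def tauLinearMap : V →ₗ[F] F where
  toFun := A.tau
  map_add' := A.tau_add
  map_smul' := A.tau_smul

def psiLinearMap : V →ₗ[F] V where
  toFun := A.psi
  map_add' := A.psi_add
  map_smul' := A.psi_smul

def gLinearMap (Y : V) : V →ₗ[F] F where
  toFun X := A.g X Y
  map_add' X X' := A.g_addX X X' Y
  map_smul' f X := A.g_smulX f X Y

def DAddMonoidHom (X : V) : F →+ F := AddMonoidHom.mk' (A.D X) (A.D_add X)

lemma tau_zero : A.tau 0 = 0 := map_zero A.tauLinearMap
lemma tau_neg (X : V) : A.tau (-X) = -A.tau X := map_neg A.tauLinearMap X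
lemma tau_sub (X Y : V) : A.tau (X - Y) = A.tau X - A.tau Y := map_sub A.tauLinearMap X Y
lemma psi_zero : A.psi 0 = 0 := map_zero A.psiLinearMap
lemma psi_neg (X : V) : A.psi (-X) = -A.psi X := map_neg A.psiLinearMap X
lemma psi_sub (X Y : V) : A.psi (X - Y) = A.psi X - A.psi Y := map_sub A.psiLinearMap X Y
lemma D_zero (X : V) : A.D X 0 = 0 := map_zero (A.DAddMonoidHom X)
lemma D_neg (X : V) (f : F) : A.D X (-f) = -A.D X f := map_neg (A.DAddMonoidHom X) f
lemma D_sub (X : V) (f g : F) : A.D X (f - g) = A.D X f - A.D X g :=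
  map_sub (A.DAddMonoidHom X) f g

lemma D_one (X : V) : A.D X 1 = 0 := by
  simpa using A.D_mul X 1 1

lemma D_zeroX (f : F) : A.D 0 f = 0 := by
  simpa using A.D_smulX 0 0 f

lemma g_subX (X Y Z : V) : A.g (X - Y) Z = A.g X Z - A.g Y Z := map_sub (A.gLinearMap Z) X Y
lemma g_addY (X Y Z : V) : A.g X (Y + Z) = A.g X Y + A.g X Z := by
  simp only [A.g_symm X, A.g_addX]
lemma g_smulY (f : F) (X Y : V) : A.g X (f • Y) = f * A.g X Y := by
  simp only [A.g_symm X, A.g_smulX]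
lemma g_zeroY (X : V) : A.g X 0 = 0 := by
  rw [A.g_symm]; exact map_zero (A.gLinearMap X)
lemma g_subY (X Y Z : V) : A.g X (Y - Z) = A.g X Y - A.g X Z := by
  simp only [A.g_symm X, A.g_subX]

lemma g_real_smulY (r : ℝ) (X Y : V) : A.g X (r • Y) = r • A.g X Y := by
  rw [← algebraMap_smul F r Y, A.g_smulY, ← Algebra.smul_def]

lemma g_zeta (X : V) : A.g X A.zeta = A.tau X := by
  have h := A.g_psi_psi X A.zeta
  rw [A.psi_zeta, A.g_zeroY, A.tau_zeta, mul_one] at h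
  linear_combination h

lemma g_psi_left (X Y : V) : A.g (A.psi X) Y = -A.g X (A.psi Y) := by
  simpa [A.tau_psi, A.psi_psi, A.g_subY, A.g_smulY, A.g_zeta] using A.g_psi_psi X (A.psi Y)

lemma koszul (X Y Z : V) : 2 * A.g (A.nabla X Y) Z =
    A.D X (A.g Y Z) + A.D Y (A.g Z X) - A.D Z (A.g X Y)
      + A.g ⁅X, Y⁆ Z - A.g ⁅Y, Z⁆ X + A.g ⁅Z, X⁆ Y := by
  rw [A.nabla_metric X Y Z, A.nabla_metric Y Z X, A.nabla_metric Z X Y,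
    ← A.nabla_torsion_free X Y, ← A.nabla_torsion_free Y Z, ← A.nabla_torsion_free Z X,
    A.g_subX, A.g_subX, A.g_subX,
    A.g_symm Y (A.nabla X Z), A.g_symm Z (A.nabla Y X), A.g_symm X (A.nabla Z Y)]
  ring

lemma two_mul_dTau (X Y : V) :
    2 * A.dTau X Y = A.D X (A.tau Y) - A.D Y (A.tau X) - A.tau ⁅X, Y⁆ := by
  rw [dTau, two_mul_real_smul]; norm_num

lemma two_mul_three_halves_smul_dPsi (X Y Z : V) : 2 * (((3:ℝ)/2) • A.dPsi X Y Z) =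
    A.D X (A.g Y (A.psi Z)) + A.D Y (A.g Z (A.psi X)) + A.D Z (A.g X (A.psi Y))
      - A.g ⁅X, Y⁆ (A.psi Z) - A.g ⁅Y, Z⁆ (A.psi X) - A.g ⁅Z, X⁆ (A.psi Y) := by
  rw [dPsi, two_mul_real_smul, smul_smul]; norm_num; rfl

def covFormula (X Y Z : V) : F :=
  -(((3:ℝ)/2) • A.dPsi X (A.psi Y) (A.psi Z))
    - ((3:ℝ)/2) • A.dPsi X Y Z
    + (A.dTau (A.psi Y) X + A.g (A.h Y) X) * A.tau Z
    - (A.dTau (A.psi Z) X + A.g (A.h Z) X) * A.tau Y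

def covPsiDefect (Y Z : V) : V :=
  ((1:ℝ)/2) • A.psi (A.K1 Y Z) + ((1:ℝ)/2) • (A.K2 Y Z • A.zeta)
    - A.tau Z • A.h Y + A.tau Y • A.h Z

lemma g_psi_K1 (X Y Z : V) : A.g X (A.psi (A.K1 Y Z)) =
    A.g X (A.psi ⁅Y, Z⁆) + A.g X (A.psi ⁅A.psi Y, A.psi Z⁆)
      - A.g X ⁅A.psi Y, Z⁆ - A.g X ⁅Y, A.psi Z⁆
      + (A.tau ⁅A.psi Y, Z⁆ + A.tau ⁅Y, A.psi Z⁆) * A.tau X := by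
  simp only [K1, nijPsi, A.psi_sub, A.psi_add, A.psi_smul, A.psi_zeta, smul_zero, A.psi_psi,
    sub_zero, A.g_subY, A.g_addY, A.g_smulY, A.g_zeta]
  ring

lemma two_mul_g_covPsiDefect (X Y Z : V) : 2 * A.g X (A.covPsiDefect Y Z) =
    A.g X (A.psi (A.K1 Y Z)) + A.K2 Y Z * A.tau X
      - A.tau Z * (2 * A.g (A.h Y) X) + A.tau Y * (2 * A.g (A.h Z) X) := by
  simp only [covPsiDefect, A.g_addY, A.g_subY, A.g_real_smulY, A.g_smulY, A.g_zeta,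
    mul_add, mul_sub, two_mul_real_smul, A.g_symm X]
  norm_num
  ring

lemma g_covPsi (X Y Z : V) :
    A.g (A.covPsi X Y) Z = A.covFormula X Y Z + A.g X (A.covPsiDefect Y Z) := by
  apply eq_of_two_mul_eq
  have k1 := A.koszul X (A.psi Y) Z
  have k2 := A.koszul X Y (A.psi Z)
  have d1 := A.two_mul_three_halves_smul_dPsi X (A.psi Y) (A.psi Z)
  have d2 := A.two_mul_three_halves_smul_dPsi X Y Z
  have t1 := A.two_mul_dTau (A.psi Y) X
  have t2 := A.two_mul_dTau (A.psi Z) X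
  have n := A.two_mul_g_covPsiDefect X Y Z
  rw [A.g_psi_K1, K2] at n
  simp only [A.psi_psi, A.psi_sub, A.psi_smul, A.psi_zeta, smul_zero, sub_zero,
    A.tau_psi, A.D_zero, A.g_psi_left, A.g_subY, A.g_smulY, A.D_mul,
    A.g_zeta, A.D_neg, A.D_sub] at k1 k2 d1 d2 t1 t2 n
  have skew1 : A.tau ⁅A.psi Y, X⁆ = -A.tau ⁅X, A.psi Y⁆ := by rw [← lie_skew, A.tau_neg]
  have skew2 : A.tau ⁅A.psi Z, Y⁆ = -A.tau ⁅Y, A.psi Z⁆ := by rw [← lie_skew, A.tau_neg]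
  rw [covPsi, covFormula, A.g_subX, A.g_psi_left]
  linear_combination k1 + k2 + d1 + d2 - A.tau Z * t1 + A.tau Y * t2 - n
    + A.tau Z * skew1 - A.tau X * skew2
    - A.g_symm ⁅A.psi Y, Z⁆ X - A.g_symm ⁅Y, A.psi Z⁆ X
    - A.g_psi_left ⁅A.psi Y, A.psi Z⁆ X - A.g_psi_left ⁅Y, Z⁆ X
    - A.g_symm X (A.psi ⁅A.psi Y, A.psi Z⁆) - A.g_symm X (A.psi ⁅Y, Z⁆)

lemma covFormula_iff_covPsiDefect_eq_zero :
    (∀ X Y Z : V, A.g (A.covPsi X Y) Z = A.covFormula X Y Z) ↔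
      ∀ Y Z : V, A.covPsiDefect Y Z = 0 := by
  refine ⟨fun hf Y Z => A.g_nondeg _ fun X => ?_, fun hN X Y Z => ?_⟩
  · rw [A.g_symm]
    simpa [hf] using A.g_covPsi X Y Z
  · rw [A.g_covPsi, hN, A.g_zeroY, add_zero]

lemma smul_lie (f : F) (X Y : V) : ⁅f • X, Y⁆ = f • ⁅X, Y⁆ - A.D Y f • X := by
  rw [← lie_skew, A.bracket_smul, ← lie_skew Y X]
  module

lemma h_add (Y Y' : V) : A.h (Y + Y') = A.h Y + A.h Y' := by
  simp only [h, liePsi, A.psi_add, lie_add]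
  module

lemma h_smul (f : F) (Y : V) : A.h (f • Y) = f • A.h Y := by
  simp only [h, liePsi, A.psi_smul, A.bracket_smul, A.psi_add]
  module

lemma dTau_skew (X Y : V) : A.dTau X Y = -A.dTau Y X := by
  simp only [dTau, ← lie_skew Y X, A.tau_neg]
  module

lemma dTau_add_left (X X' Y : V) : A.dTau (X + X') Y = A.dTau X Y + A.dTau X' Y := by
  simp only [dTau, A.D_addX, A.tau_add, add_lie, A.D_add]
  module

lemma dTau_smul_left (f : F) (X Y : V) : A.dTau (f • X) Y = f * A.dTau X Y := by
  simp only [dTau, A.D_smulX, A.smul_lie, A.tau_sub, A.tau_smul, A.D_mul, mul_smul_comm]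
  congr 1
  ring

lemma K1_skew (Y Z : V) : A.K1 Y Z = -A.K1 Z Y := by
  simp only [K1, nijPsi, ← lie_skew Y Z, ← lie_skew (A.psi Y) (A.psi Z),
    ← lie_skew (A.psi Y) Z, ← lie_skew Y (A.psi Z), A.psi_neg, A.dTau_skew Z Y]
  module

lemma K1_add_left (Y Y' Z : V) : A.K1 (Y + Y') Z = A.K1 Y Z + A.K1 Y' Z := by
  simp only [K1, nijPsi, A.psi_add, add_lie, A.dTau_add_left]
  module

lemma K1_add_right (Y Z Z' : V) : A.K1 Y (Z + Z') = A.K1 Y Z + A.K1 Y Z' := by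
  rw [A.K1_skew, A.K1_add_left, A.K1_skew Z, A.K1_skew Z']
  module

lemma K1_smul_left (f : F) (Y Z : V) : A.K1 (f • Y) Z = f • A.K1 Y Z := by
  simp only [K1, nijPsi, A.psi_smul, A.smul_lie, A.psi_sub, A.dTau_smul_left]
  module

lemma K2_skew (Y Z : V) : A.K2 Y Z = -A.K2 Z Y := by
  simp only [K2]; ring

lemma K2_add_left (Y Y' Z : V) : A.K2 (Y + Y') Z = A.K2 Y Z + A.K2 Y' Z := by
  simp only [K2, A.psi_add, A.D_addX, add_lie, lie_add, A.tau_add, A.D_add]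
  ring

lemma K2_smul_left (f : F) (Y Z : V) : A.K2 (f • Y) Z = f * A.K2 Y Z := by
  simp only [K2, A.psi_smul, A.D_smulX, A.smul_lie, A.bracket_smul, A.tau_sub,
    A.tau_add, A.tau_smul, A.tau_psi, A.D_mul]
  ring

lemma covPsiDefect_skew (Y Z : V) : A.covPsiDefect Y Z = -A.covPsiDefect Z Y := by
  rw [covPsiDefect, covPsiDefect, A.K1_skew, A.K2_skew, A.psi_neg]
  module

lemma covPsiDefect_add_left (Y Y' Z : V) :
    A.covPsiDefect (Y + Y') Z = A.covPsiDefect Y Z + A.covPsiDefect Y' Z := by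
  rw [covPsiDefect, covPsiDefect, covPsiDefect, A.K1_add_left, A.K2_add_left, A.psi_add,
    A.h_add, A.tau_add]
  module

lemma covPsiDefect_smul_left (f : F) (Y Z : V) :
    A.covPsiDefect (f • Y) Z = f • A.covPsiDefect Y Z := by
  rw [covPsiDefect, covPsiDefect, A.K1_smul_left, A.K2_smul_left, A.psi_smul, A.h_smul,
    A.tau_smul]
  module

lemma covPsiDefect_zeta_left (Z : V) : A.covPsiDefect A.zeta Z = 0 := by
  simp only [covPsiDefect, K1, nijPsi, K2, h, liePsi, A.psi_zeta, zero_lie, lie_zero,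
    A.psi_zero, A.D_zeroX, A.tau_zeta, A.D_one, A.psi_sub, A.psi_add, A.psi_smul, A.psi_psi,
    A.tau_zero, lie_self,
    ← lie_skew A.zeta (A.psi Z), A.tau_neg]
  module

lemma covPsiDefect_add_smul_zeta_left (Y Z : V) (f : F) :
    A.covPsiDefect (Y + f • A.zeta) Z = A.covPsiDefect Y Z := by
  rw [A.covPsiDefect_add_left, A.covPsiDefect_smul_left, A.covPsiDefect_zeta_left, smul_zero,
    add_zero]

lemma tau_sub_tau_smul_zeta (Y : V) : A.tau (Y - A.tau Y • A.zeta) = 0 := by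
  rw [A.tau_sub, A.tau_smul, A.tau_zeta, mul_one, sub_self]

lemma covPsiDefect_eq_zero_of_ker_tau
    (hN : ∀ Y Z : V, A.tau Y = 0 → A.tau Z = 0 → A.covPsiDefect Y Z = 0) (Y Z : V) :
    A.covPsiDefect Y Z = 0 := by
  have horiz_left : ∀ Y Z : V, A.covPsiDefect Y Z = A.covPsiDefect (Y - A.tau Y • A.zeta) Z :=
    fun Y Z => by
      simpa only [sub_add_cancel] using
        A.covPsiDefect_add_smul_zeta_left (Y - A.tau Y • A.zeta) Z (A.tau Y)
  rw [horiz_left, A.covPsiDefect_skew, horiz_left,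
    hN _ _ (A.tau_sub_tau_smul_zeta Z) (A.tau_sub_tau_smul_zeta Y), neg_zero]

lemma two_mul_dTau_of_tau_eq_zero {X Y : V} (hX : A.tau X = 0) (hY : A.tau Y = 0) :
    2 * A.dTau X Y = -A.tau ⁅X, Y⁆ := by
  rw [A.two_mul_dTau, hX, hY, A.D_zero, A.D_zero]
  ring

/-- On `ker τ`, `K⁽²⁾(Y,Z) = -τ(K⁽¹⁾(ψY, Z))`. -/
lemma K2_eq_zero_of_tauNormal (hN : A.TauNormal) {Y Z : V} (hY : A.tau Y = 0)
    (hZ : A.tau Z = 0) : A.K2 Y Z = 0 := by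
  have hK1 := congrArg A.tau (hN (A.psi Y) Z (A.tau_psi Y) hZ)
  simp only [K1, nijPsi, A.tau_sub, A.tau_add, A.tau_smul, A.tau_zeta, A.tau_psi, A.psi_psi,
    hY, zero_smul, sub_zero, mul_one, A.tau_zero,
    A.two_mul_dTau_of_tau_eq_zero (A.tau_psi Y) hZ] at hK1
  rw [K2, hY, hZ, A.D_zero, A.D_zero, ← lie_skew (A.psi Z) Y, A.tau_neg]
  linear_combination -hK1

lemma two_smul_covPsiDefect_of_tau_eq_zero {Y Z : V} (hY : A.tau Y = 0) (hZ : A.tau Z = 0) :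
    (2:ℝ) • A.covPsiDefect Y Z = A.psi (A.K1 Y Z) + A.K2 Y Z • A.zeta := by
  rw [covPsiDefect, hY, hZ, zero_smul, zero_smul, sub_zero, add_zero, smul_add, smul_smul,
    smul_smul]
  norm_num

lemma covPsiDefect_eq_zero_of_tauNormal (hN : A.TauNormal) (Y Z : V) :
    A.covPsiDefect Y Z = 0 := by
  refine A.covPsiDefect_eq_zero_of_ker_tau (fun Y Z hY hZ => ?_) Y Z
  rw [← smul_eq_zero_iff_right (two_ne_zero' ℝ), A.two_smul_covPsiDefect_of_tau_eq_zero hY hZ,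
    hN Y Z hY hZ, A.K2_eq_zero_of_tauNormal hN hY hZ, A.psi_zero, zero_smul, add_zero]

lemma tau_eq_zero_of_Vp {a : V} (ha : A.Vp a) : A.tau a = 0 := by
  have h := A.tau_psi a
  rwa [ha] at h

lemma tau_eq_zero_of_Vm {a : V} (ha : A.Vm a) : A.tau a = 0 := by
  have h := A.tau_psi a
  rwa [ha, A.tau_neg, neg_eq_zero] at h

lemma exists_Vp_Vm_of_tau_eq_zero {Y : V} (hY : A.tau Y = 0) :
    ∃ a b, A.Vp a ∧ A.Vm b ∧ Y = a + b := by
  refine ⟨((1:ℝ)/2) • (Y + A.psi Y), ((1:ℝ)/2) • (Y - A.psi Y), ?_, ?_, by module⟩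
  · rw [Vp, ← algebraMap_smul F, A.psi_smul, A.psi_add, A.psi_psi, hY]
    module
  · rw [Vm, ← algebraMap_smul F, A.psi_smul, A.psi_sub, A.psi_psi, hY]
    module

lemma K1_of_Vp {a b : V} (ha : A.Vp a) (hb : A.Vp b) :
    A.K1 a b = (2:ℝ) • (⁅a, b⁆ - A.psi ⁅a, b⁆) := by
  rw [K1, nijPsi, ha, hb, A.two_mul_dTau_of_tau_eq_zero (A.tau_eq_zero_of_Vp ha)
    (A.tau_eq_zero_of_Vp hb), A.psi_psi, two_smul]
  module

lemma K1_of_Vm {a b : V} (ha : A.Vm a) (hb : A.Vm b) :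
    A.K1 a b = (2:ℝ) • (⁅a, b⁆ + A.psi ⁅a, b⁆) := by
  rw [K1, nijPsi, ha, hb, A.two_mul_dTau_of_tau_eq_zero (A.tau_eq_zero_of_Vm ha)
    (A.tau_eq_zero_of_Vm hb), A.psi_psi, two_smul]
  simp only [neg_lie, lie_neg, neg_neg, A.psi_neg]
  module

lemma K1_of_Vp_of_Vm {a b : V} (ha : A.Vp a) (hb : A.Vm b) : A.K1 a b = 0 := by
  rw [K1, nijPsi, ha, hb, A.two_mul_dTau_of_tau_eq_zero (A.tau_eq_zero_of_Vp ha)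
    (A.tau_eq_zero_of_Vm hb), A.psi_psi]
  simp only [lie_neg, A.psi_neg]
  module

lemma K1_eq_zero_iff_of_Vp {a b : V} (ha : A.Vp a) (hb : A.Vp b) :
    A.K1 a b = 0 ↔ A.Vp ⁅a, b⁆ := by
  rw [A.K1_of_Vp ha hb, smul_eq_zero_iff_right two_ne_zero, sub_eq_zero, Vp, eq_comm]

lemma K1_eq_zero_iff_of_Vm {a b : V} (ha : A.Vm a) (hb : A.Vm b) :
    A.K1 a b = 0 ↔ A.Vm ⁅a, b⁆ := by
  rw [A.K1_of_Vm ha hb, smul_eq_zero_iff_right two_ne_zero, add_eq_zero_iff_neg_eq, Vm,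
    eq_comm]

lemma tauNormal_iff_paraCR : A.TauNormal ↔ A.ParaCR := by
  refine ⟨fun hN => ⟨fun a b ha hb => ?_, fun a b ha hb => ?_⟩, fun hP Y Z hY hZ => ?_⟩
  · exact (A.K1_eq_zero_iff_of_Vp ha hb).1
      (hN a b (A.tau_eq_zero_of_Vp ha) (A.tau_eq_zero_of_Vp hb))
  · exact (A.K1_eq_zero_iff_of_Vm ha hb).1
      (hN a b (A.tau_eq_zero_of_Vm ha) (A.tau_eq_zero_of_Vm hb))
  · obtain ⟨a, a', ha, ha', rfl⟩ := A.exists_Vp_Vm_of_tau_eq_zero hY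
    obtain ⟨b, b', hb, hb', rfl⟩ := A.exists_Vp_Vm_of_tau_eq_zero hZ
    rw [A.K1_add_left, A.K1_add_right, A.K1_add_right, (A.K1_eq_zero_iff_of_Vp ha hb).2
      (hP.1 a b ha hb), (A.K1_eq_zero_iff_of_Vm ha' hb').2 (hP.2 a' b' ha' hb'),
      A.K1_of_Vp_of_Vm ha hb', A.K1_skew, A.K1_of_Vp_of_Vm hb ha']
    simp

lemma psi_K1_add_K2_smul_zeta_of_Vp {a b : V} (ha : A.Vp a) (hb : A.Vp b) :
    A.psi (A.K1 a b) + A.K2 a b • A.zeta = (2:ℝ) • (A.psi ⁅a, b⁆ - ⁅a, b⁆) := by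
  rw [K2, A.K1_of_Vp ha hb, ha, hb, A.tau_eq_zero_of_Vp ha, A.tau_eq_zero_of_Vp hb, A.D_zero,
    A.D_zero, ← lie_skew b a, A.tau_neg, two_smul, two_smul, A.psi_add, A.psi_sub, A.psi_psi]
  module

lemma psi_K1_add_K2_smul_zeta_of_Vm {a b : V} (ha : A.Vm a) (hb : A.Vm b) :
    A.psi (A.K1 a b) + A.K2 a b • A.zeta = (2:ℝ) • (A.psi ⁅a, b⁆ + ⁅a, b⁆) := by
  rw [K2, A.K1_of_Vm ha hb, ha, hb]
  simp only [neg_lie, ← lie_skew b a, A.tau_neg, A.tau_eq_zero_of_Vm ha, A.tau_eq_zero_of_Vm hb,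
    A.D_zero, two_smul, A.psi_add, A.psi_psi]
  module

lemma covPsiDefect_eq_zero_iff_of_Vp {a b : V} (ha : A.Vp a) (hb : A.Vp b) :
    A.covPsiDefect a b = 0 ↔ A.Vp ⁅a, b⁆ := by
  rw [← smul_eq_zero_iff_right (two_ne_zero' ℝ), A.two_smul_covPsiDefect_of_tau_eq_zero
    (A.tau_eq_zero_of_Vp ha) (A.tau_eq_zero_of_Vp hb), A.psi_K1_add_K2_smul_zeta_of_Vp ha hb,
    smul_eq_zero_iff_right two_ne_zero, sub_eq_zero, Vp]

lemma covPsiDefect_eq_zero_iff_of_Vm {a b : V} (ha : A.Vm a) (hb : A.Vm b) :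
    A.covPsiDefect a b = 0 ↔ A.Vm ⁅a, b⁆ := by
  rw [← smul_eq_zero_iff_right (two_ne_zero' ℝ), A.two_smul_covPsiDefect_of_tau_eq_zero
    (A.tau_eq_zero_of_Vm ha) (A.tau_eq_zero_of_Vm hb), A.psi_K1_add_K2_smul_zeta_of_Vm ha hb,
    smul_eq_zero_iff_right two_ne_zero, add_eq_zero_iff_eq_neg, Vm]

lemma paraCR_of_covPsiDefect_eq_zero (hN : ∀ Y Z : V, A.covPsiDefect Y Z = 0) : A.ParaCR :=
  ⟨fun a b ha hb => (A.covPsiDefect_eq_zero_iff_of_Vp ha hb).1 (hN a b),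
    fun a b ha hb => (A.covPsiDefect_eq_zero_iff_of_Vm ha hb).1 (hN a b)⟩

end APCMS

/-- For an almost paracontact metric manifold `M` the following
are equivalent: (1) `M` is `τ`-normal; (2) `M` is a para-CR manifold; (3) with
`u(Y,X) = dτ(ψY, X) + g(hY, X)`, the Levi-Civita covariant derivative of `ψ`
satisfies `g((∇_X ψ)Y, Z) = -(3/2)dΨ(X, ψY, ψZ) - (3/2)dΨ(X,Y,Z)
+ u(Y,X)τ(Z) - u(Z,X)τ(Y)` for all vector fields `X, Y, Z`. -/
theorem tau_normal_iff_paraCR_iff_covariant_formula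
    {F V : Type*} [CommRing F] [Algebra ℝ F]
    [LieRing V] [Module F V] [Module ℝ V] [IsScalarTower ℝ F V]
    (A : APCMS F V) :
    (A.TauNormal ↔ A.ParaCR) ∧
    (A.TauNormal ↔ ∀ X Y Z : V,
      A.g (A.covPsi X Y) Z =
        -(((3:ℝ)/2) • A.dPsi X (A.psi Y) (A.psi Z))
          - ((3:ℝ)/2) • A.dPsi X Y Z
          + (A.dTau (A.psi Y) X + A.g (A.h Y) X) * A.tau Z
          - (A.dTau (A.psi Z) X + A.g (A.h Z) X) * A.tau Y) := by
  refine ⟨A.tauNormal_iff_paraCR, ?_⟩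
  refine Iff.trans ?_ A.covFormula_iff_covPsiDefect_eq_zero.symm
  exact ⟨A.covPsiDefect_eq_zero_of_tauNormal,
    fun hN => A.tauNormal_iff_paraCR.2 (A.paraCR_of_covPsiDefect_eq_zero hN)⟩
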